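/- The isolation number of the path P_n on n ≥ 1 vertices equals ⌈(n−1)/4⌉. -/

import Mathlib

open SimpleGraph

/-- `v` lies in the closed neighbourhood of the set `D`. -/
def inClosedNbhd {V : Type*} (G : SimpleGraph V) (D : Set V) (v : V) : Prop :=
  ∃ d ∈ D, d = v ∨ G.Adj d v

/-- `D` is an isolating set of `G`: the graph induced on the vertices outside
`N[D]` has no edges. -/
def IsIsolating {V : Type*} (G : SimpleGraph V) (D : Set V) : Prop :=
  ∀ u v : V, G.Adj u v → inClosedNbhd G D u ∨ inClosedNbhd G D v

/-- The isolation number of a finite graph. -/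
noncomputable def iso {V : Type*} (G : SimpleGraph V) [Fintype V] : ℕ :=
  sInf {n | ∃ D : Finset V, D.card = n ∧ IsIsolating G ↑D}

/-- The graph obtained from `G` by subdividing each edge in `A` once; the new
(subdivision) vertices are the elements of `A`. -/
def subdivide {V : Type*} (G : SimpleGraph V) (A : Finset (Sym2 V)) :
    SimpleGraph (V ⊕ {e : Sym2 V // e ∈ A}) where
  Adj x y :=
    match x, y with
    | Sum.inl u, Sum.inl v => G.Adj u v ∧ s(u, v) ∉ A
    | Sum.inl u, Sum.inr e => u ∈ (e : Sym2 V)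
    | Sum.inr e, Sum.inl u => u ∈ (e : Sym2 V)
    | Sum.inr _, Sum.inr _ => False
  symm := by
    constructor
    rintro (u | e) (v | f) h <;> dsimp only at h ⊢ <;>
      first
        | exact ⟨h.1.symm, by rw [Sym2.eq_swap]; exact h.2⟩
        | exact h
        | exact h.elim
  loopless := by
    constructor
    rintro (u | e) h <;> dsimp only at h <;>
      first
        | exact G.loopless.irrefl u h.1
        | exact h

/-- A graph is `(ι,q)`-critical. -/
def IotaCritical {V : Type*} (G : SimpleGraph V) [Fintype V] (q : ℕ) : Prop :=
  (∀ A : Finset (Sym2 V), ↑A ⊆ G.edgeSet → A.card = q →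
      iso G < iso (subdivide G A)) ∧
  (∃ A : Finset (Sym2 V), ↑A ⊆ G.edgeSet ∧ A.card = q - 1 ∧
      iso (subdivide G A) = iso G)

section Isolation

variable {V : Type*} {G : SimpleGraph V}

theorem isIsolating_univ [Fintype V] : IsIsolating G (Finset.univ : Finset V) :=
  fun u _ _ => Or.inl ⟨u, by simp, Or.inl rfl⟩

theorem iso_le_card [Fintype V] {D : Finset V} (hD : IsIsolating G D) : iso G ≤ D.card :=
  Nat.sInf_le ⟨D, rfl, hD⟩

theorem le_iso_of_forall_le_card [Fintype V] {k : ℕ}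
    (h : ∀ D : Finset V, IsIsolating G D → k ≤ D.card) : k ≤ iso G := by
  obtain ⟨D, hcard, hD⟩ : iso G ∈ {n | ∃ D : Finset V, D.card = n ∧ IsIsolating G ↑D} :=
    Nat.sInf_mem ⟨_, Finset.univ, rfl, isIsolating_univ⟩
  exact hcard ▸ h D hD

end Isolation

section Path

theorem inClosedNbhd_pathGraph_iff {n : ℕ} {D : Set (Fin n)} {v : Fin n} :
    inClosedNbhd (pathGraph n) D v ↔ ∃ d ∈ D, d.val ≤ v.val + 1 ∧ v.val ≤ d.val + 1 := by
  simp only [inClosedNbhd, pathGraph_adj, Fin.ext_iff]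
  exact exists_congr fun d => and_congr_right fun _ => by omega

/-- Every fourth vertex, starting from vertex `2`, with the last one moved back onto the path. -/
def pathIsolatingSet (n : ℕ) : Finset (Fin (n + 1)) :=
  (Finset.range ((n + 3) / 4)).image fun i => ⟨min (4 * i + 2) n, by omega⟩

theorem isIsolating_pathIsolatingSet (n : ℕ) :
    IsIsolating (pathGraph (n + 1)) (pathIsolatingSet n) := by
  have hmem : ∀ i < (n + 3) / 4, ∀ h,
      (⟨min (4 * i + 2) n, h⟩ : Fin (n + 1)) ∈ (pathIsolatingSet n : Set (Fin (n + 1))) :=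
    fun i hi _ => Finset.mem_image.mpr ⟨i, Finset.mem_range.mpr hi, rfl⟩
  -- The edge `{a, a + 1}` is isolated by the chosen vertex of block `a / 4`: it is at distance
  -- at most one from `a + 1` when `4 ∣ a`, and from `a` otherwise.
  have key : ∀ u v : Fin (n + 1), v.val = u.val + 1 →
      inClosedNbhd (pathGraph (n + 1)) (pathIsolatingSet n) u ∨
        inClosedNbhd (pathGraph (n + 1)) (pathIsolatingSet n) v := by
    intro u v huv
    simp only [inClosedNbhd_pathGraph_iff]
    have hd := hmem (u.val / 4) (by omega) (by omega)
    by_cases h4 : u.val % 4 = 0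
    · exact Or.inr ⟨_, hd, by simp only; omega⟩
    · exact Or.inl ⟨_, hd, by simp only; omega⟩
  intro u v huv
  rcases pathGraph_adj.mp huv with h | h
  · exact key u v h.symm
  · exact (key v u h.symm).symm

theorem iso_pathGraph_le (n : ℕ) : iso (pathGraph n) ≤ (n + 2) / 4 := by
  cases n with
  | zero => exact iso_le_card (D := ∅) fun u => u.elim0
  | succ n =>
    calc iso (pathGraph (n + 1)) ≤ (pathIsolatingSet n).card :=
          iso_le_card (isIsolating_pathIsolatingSet n)
      _ ≤ (n + 3) / 4 := Finset.card_image_le.trans (Finset.card_range _).le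

/-- The edges `{4i, 4i + 1}`, `i < (n + 2) / 4`, have pairwise disjoint closed neighbourhoods
`{4i - 1, …, 4i + 2}`; an isolating set meets each, as witnessed by `d ↦ (d + 1) / 4`. -/
theorem le_card_of_isIsolating_pathGraph {n : ℕ} {D : Finset (Fin n)}
    (hD : IsIsolating (pathGraph n) D) : (n + 2) / 4 ≤ D.card := by
  suffices Finset.range ((n + 2) / 4) ⊆ D.image fun d => (d.val + 1) / 4 from
    (Finset.card_range _ ▸ Finset.card_le_card this).trans Finset.card_image_le
  intro i hi
  rw [Finset.mem_range] at hi
  have hadj : (pathGraph n).Adj ⟨4 * i, by omega⟩ ⟨4 * i + 1, by omega⟩ :=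
    pathGraph_adj.mpr (Or.inl rfl)
  simp only [Finset.mem_image]
  rcases hD _ _ hadj with hu | hv
  · obtain ⟨d, hdD, hd⟩ := inClosedNbhd_pathGraph_iff.mp hu
    exact ⟨d, hdD, by simp only at hd; omega⟩
  · obtain ⟨d, hdD, hd⟩ := inClosedNbhd_pathGraph_iff.mp hv
    exact ⟨d, hdD, by simp only at hd; omega⟩

end Path

theorem stmt2_general (n : ℕ) :
    iso (SimpleGraph.pathGraph n) = (n - 1 + 3) / 4 := by
  rw [show (n - 1 + 3) / 4 = (n + 2) / 4 by omega]
  exact le_antisymm (iso_pathGraph_le n)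
    (le_iso_of_forall_le_card fun _ => le_card_of_isIsolating_pathGraph)

theorem stmt2 (n : ℕ) (hn : 1 ≤ n) :
    iso (SimpleGraph.pathGraph n) = (n - 1 + 3) / 4 :=
  stmt2_general n
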